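/- arXiv:2604.23464 — 3 statements merged into one kernel-verified Lean document; each statement's English description precedes it below -/
import Mathlib

section
/- Define the random variable m̂ = E[(X − Y)² | 𝒢] − v − b² + 2c + 2·b·d. Then E[m̂] = E[(X − θ)²]; that is, m̂ is an unbiased estimator of the oracle training mean squared error of the model-based estimator X for the constant target θ. -/
/-!
Pointwise, the bias and covariance corrections collapse: `-v - b² + 2c + 2bd` equals
`-E[Y² | 𝒢] + 2 E[XY | 𝒢] + θ² - 2θ E[X | 𝒢]`, so by linearity of conditional expectation
`m̂` is a.e. `E[(X - Y)² - Y² + 2XY - 2θX + θ² | 𝒢] = E[(X - θ)² | 𝒢]`, whose expectation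
is `E[(X - θ)²]`.
-/

open MeasureTheory

section

variable {Ω : Type*} {F : MeasurableSpace Ω} {μ : Measure Ω} {G : MeasurableSpace Ω}

theorem condExp_sq_sub_const_ae_eq [IsFiniteMeasure μ] (hG : G ≤ F) (θ : ℝ) {X Y : Ω → ℝ}
    (hX : MemLp X 2 μ) (hY : MemLp Y 2 μ) :
    μ[fun ω => (X ω - θ) ^ 2|G] =ᵐ[μ] fun ω => μ[fun x => (X x - Y x) ^ 2|G] ω
      - μ[fun x => Y x ^ 2|G] ω + 2 * μ[fun x => X x * Y x|G] ω - 2 * θ * μ[X|G] ω + θ ^ 2 := by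
  set D := fun x => (X x - Y x) ^ 2
  set Y2 := fun x => Y x ^ 2
  set XY := fun x => X x * Y x
  have hD : Integrable D μ := (hX.sub hY).integrable_sq
  have hY2 : Integrable Y2 μ := hY.integrable_sq
  have hXY : Integrable XY μ := hX.integrable_mul hY
  have hX2θ : Integrable ((2 * θ) • X) μ := (hX.integrable one_le_two).smul (2 * θ)
  have hsplit : (fun ω => (X ω - θ) ^ 2) = D - Y2 + (2 : ℝ) • XY - (2 * θ) • X + fun _ => θ ^ 2 := by
    funext ω
    simp only [D, Y2, XY, Pi.add_apply, Pi.sub_apply, Pi.smul_apply, smul_eq_mul]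
    ring
  rw [hsplit]
  filter_upwards [condExp_add (((hD.sub hY2).add (hXY.smul (2 : ℝ))).sub hX2θ)
      (integrable_const (θ ^ 2)) G,
    condExp_sub ((hD.sub hY2).add (hXY.smul (2 : ℝ))) hX2θ G,
    condExp_add (hD.sub hY2) (hXY.smul (2 : ℝ)) G, condExp_sub hD hY2 G,
    condExp_smul (2 : ℝ) XY G, condExp_smul (2 * θ) X G] with ω h₁ h₂ h₃ h₄ h₅ h₆
  simp only [h₁, h₂, h₃, h₄, h₅, h₆, Pi.add_apply, Pi.sub_apply, Pi.smul_apply, smul_eq_mul,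
    condExp_const hG]

end

/-- The random variable
`m̂ = E[(X − Y)² | 𝒢] − v − b² + 2c + 2·b·d` satisfies `E[m̂] = E[(X − θ)²]`,
i.e. it is an unbiased estimator of the oracle training mean squared error of
the model-based estimator `X` for the constant target `θ`.  Here
`b = E[Y|𝒢] − θ`, `d = E[X|𝒢] − θ`, `v = E[Y²|𝒢] − (E[Y|𝒢])²`, and
`c = E[X·Y|𝒢] − E[X|𝒢]·E[Y|𝒢]`. -/
theorem cv_unbiased_oracle_training_mse
    {Ω : Type*} {F : MeasurableSpace Ω} {μ : Measure Ω} [IsProbabilityMeasure μ]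
    {G : MeasurableSpace Ω} (hG : G ≤ F)
    (θ : ℝ) (X Y : Ω → ℝ)
    (hX : MemLp X 2 μ) (hY : MemLp Y 2 μ) :
    ∫ ω, ((μ[(fun x => (X x - Y x) ^ 2)|G]) ω
        - ((μ[(fun x => Y x ^ 2)|G]) ω - ((μ[Y|G]) ω) ^ 2)
        - ((μ[Y|G]) ω - θ) ^ 2
        + 2 * ((μ[(fun x => X x * Y x)|G]) ω - (μ[X|G]) ω * (μ[Y|G]) ω)
        + 2 * ((μ[Y|G]) ω - θ) * ((μ[X|G]) ω - θ)) ∂μ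
      = ∫ ω, (X ω - θ) ^ 2 ∂μ := by
  calc _ = ∫ ω, (μ[fun x => (X x - Y x) ^ 2|G] ω - μ[fun x => Y x ^ 2|G] ω
          + 2 * μ[fun x => X x * Y x|G] ω - 2 * θ * μ[X|G] ω + θ ^ 2) ∂μ :=
        integral_congr_ae (ae_of_all _ fun ω => by ring)
    _ = ∫ ω, μ[fun x => (X x - θ) ^ 2|G] ω ∂μ :=
        integral_congr_ae (condExp_sq_sub_const_ae_eq hG θ hX hY).symm
    _ = ∫ ω, (X ω - θ) ^ 2 ∂μ := integral_condExp hG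
end

section
/- Define the adjusted score as the random variable score = E[(X − Y)² | 𝒢] − v + 2c. Then E[score] = E[(X − θ)²] + E[b²] − 2·E[b·d]; that is, the expected adjusted score equals the oracle training mean squared error of X plus the expected squared conditional bias of the direct estimator minus twice the expected product of the two conditional biases. -/
/-!
Write `m = E[Y | 𝒢]` and `n = E[X | 𝒢]`. Linearity of conditional expectation turns the
score into `E[X² | 𝒢] + m² − 2 m n` almost surely, so by the tower property its mean is
`E[X²] + E[m²] − 2 E[m n]`. Expanding the three squares on the right-hand side gives the same
quantity plus `2 θ (E[X] − E[n])`, which vanishes again by the tower property.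
-/

open MeasureTheory

section

variable {Ω : Type*} {m₀ : MeasurableSpace Ω} {μ : Measure Ω}

lemma condExp_sub_sq_ae_eq {m : MeasurableSpace Ω} {X Y : Ω → ℝ}
    (hX : MemLp X 2 μ) (hY : MemLp Y 2 μ) :
    μ[fun ω => (X ω - Y ω) ^ 2 | m] =ᵐ[μ] fun ω =>
      μ[fun ω => X ω ^ 2 | m] ω + μ[fun ω => Y ω ^ 2 | m] ω
        - 2 * μ[fun ω => X ω * Y ω | m] ω := by
  have hsq : (fun ω => (X ω - Y ω) ^ 2)
      = (fun ω => X ω ^ 2) + (fun ω => Y ω ^ 2) - (2 : ℝ) • fun ω => X ω * Y ω := by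
    funext ω
    simp only [Pi.add_apply, Pi.sub_apply, Pi.smul_apply, smul_eq_mul]
    ring
  have hXY : Integrable (fun ω => X ω * Y ω) μ := hX.integrable_mul hY
  rw [hsq]
  filter_upwards [condExp_sub (hX.integrable_sq.add hY.integrable_sq) (hXY.smul (2 : ℝ)) m,
    condExp_add hX.integrable_sq hY.integrable_sq m,
    condExp_smul (μ := μ) (2 : ℝ) (fun ω => X ω * Y ω) m] with ω hsub hadd hsmul
  simp only [hsub, Pi.sub_apply, hadd, Pi.add_apply, hsmul, Pi.smul_apply, smul_eq_mul]

lemma integral_sub_const_mul_sub_const [IsProbabilityMeasure μ] {f g : Ω → ℝ}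
    (hf : MemLp f 2 μ) (hg : MemLp g 2 μ) (a b : ℝ) :
    ∫ ω, (f ω - a) * (g ω - b) ∂μ
      = ∫ ω, f ω * g ω ∂μ - b * ∫ ω, f ω ∂μ - a * ∫ ω, g ω ∂μ + a * b := by
  have hfi : Integrable f μ := hf.integrable one_le_two
  have hgi : Integrable g μ := hg.integrable one_le_two
  have hfg : Integrable (fun ω => f ω * g ω) μ := hf.integrable_mul hg
  have hexpand : (fun ω => (f ω - a) * (g ω - b))
      = fun ω => f ω * g ω - b * f ω - a * g ω + a * b := by
    funext ω; ring
  rw [hexpand, integral_add, integral_sub, integral_sub, integral_const_mul, integral_const_mul,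
    integral_const, probReal_univ, one_smul]
  all_goals fun_prop

lemma integral_sub_const_sq [IsProbabilityMeasure μ] {f : Ω → ℝ} (hf : MemLp f 2 μ) (a : ℝ) :
    ∫ ω, (f ω - a) ^ 2 ∂μ = ∫ ω, f ω ^ 2 ∂μ - 2 * a * ∫ ω, f ω ∂μ + a ^ 2 := by
  simp only [sq]
  rw [integral_sub_const_mul_sub_const hf hf]
  ring

end

/-- For the adjusted score
`score = E[(X − Y)² | 𝒢] − v + 2c`, one has
`E[score] = E[(X − θ)²] + E[b²] − 2·E[b·d]`: the expected adjusted score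
equals the oracle training mean squared error of `X` plus the expected
squared conditional bias of the direct estimator minus twice the expected
product of the two conditional biases.  Here `b = E[Y|𝒢] − θ`,
`d = E[X|𝒢] − θ`, `v = E[Y²|𝒢] − (E[Y|𝒢])²`, and
`c = E[X·Y|𝒢] − E[X|𝒢]·E[Y|𝒢]`. -/
theorem expected_adjusted_score_decomposition
    {Ω : Type*} {F : MeasurableSpace Ω} {μ : Measure Ω} [IsProbabilityMeasure μ]
    {G : MeasurableSpace Ω} (hG : G ≤ F)
    (θ : ℝ) (X Y : Ω → ℝ)
    (hX : MemLp X 2 μ) (hY : MemLp Y 2 μ) :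
    ∫ ω, ((μ[(fun x => (X x - Y x) ^ 2)|G]) ω
        - ((μ[(fun x => Y x ^ 2)|G]) ω - ((μ[Y|G]) ω) ^ 2)
        + 2 * ((μ[(fun x => X x * Y x)|G]) ω - (μ[X|G]) ω * (μ[Y|G]) ω)) ∂μ
      = (∫ ω, (X ω - θ) ^ 2 ∂μ)
        + (∫ ω, ((μ[Y|G]) ω - θ) ^ 2 ∂μ)
        - 2 * ∫ ω, ((μ[Y|G]) ω - θ) * ((μ[X|G]) ω - θ) ∂μ := by
  have hm : MemLp (μ[Y|G]) 2 μ := hY.condExp one_le_two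
  have hn : MemLp (μ[X|G]) 2 μ := hX.condExp one_le_two
  have hscore : (fun ω => (μ[(fun x => (X x - Y x) ^ 2)|G]) ω
        - ((μ[(fun x => Y x ^ 2)|G]) ω - ((μ[Y|G]) ω) ^ 2)
        + 2 * ((μ[(fun x => X x * Y x)|G]) ω - (μ[X|G]) ω * (μ[Y|G]) ω))
      =ᵐ[μ] fun ω => (μ[(fun x => X x ^ 2)|G]) ω
        + ((μ[Y|G]) ω ^ 2 - 2 * ((μ[Y|G]) ω * (μ[X|G]) ω)) := by
    filter_upwards [condExp_sub_sq_ae_eq hX hY] with ω h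
    rw [h]
    ring
  have hEn : ∫ ω, (μ[X|G]) ω ∂μ = ∫ ω, X ω ∂μ := integral_condExp hG
  have hmn : Integrable (fun ω => (μ[Y|G]) ω * (μ[X|G]) ω) μ := hm.integrable_mul hn
  have hrest : Integrable (fun ω => (μ[Y|G]) ω ^ 2 - 2 * ((μ[Y|G]) ω * (μ[X|G]) ω)) μ :=
    hm.integrable_sq.sub (hmn.const_mul 2)
  rw [integral_congr_ae hscore, integral_add integrable_condExp hrest,
    integral_sub hm.integrable_sq (hmn.const_mul 2), integral_const_mul, integral_condExp hG,
    integral_sub_const_sq hX, integral_sub_const_sq hm, integral_sub_const_mul_sub_const hm hn,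
    hEn]
  ring
end

section
/- Assume the direct estimator is design-unbiased, E[Y] = θ. Define for j = 1, 2 the adjusted score score_j = E[(X_j − Y)² | 𝒢] − v + 2c_j. Then E[score₁ − score₂] = E[(X₁ − θ)² − (X₂ − θ)²] + e, where the remainder is e = −2·Cov(b, d₁ − d₂); that is, the expected adjusted cross-validation score difference equals the oracle mean-squared-error difference of the two models plus a remainder given by minus twice the covariance between the conditional bias of the direct estimator and the difference of the conditional model biases. -/
/-!
Pointwise `(X - Y)² - Y² + 2XY = X²`, so integrating the adjusted score and using
`∫ μ[f|𝒢] = ∫ f` leaves `E[X²] - 2 E[E[X|𝒢] E[Y|𝒢]] + E[E[Y|𝒢]²]`. Since `E[E[Y|𝒢]] = E[Y] = θ`,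
this is `E[(X - θ)²] - 2 Cov(E[Y|𝒢], E[X|𝒢]) + Var(E[Y|𝒢])`. In the difference of two scores the
variance cancels, and the two covariances combine into `Cov(b, d₁ - d₂)` because covariance is
bilinear and blind to the constant shifts by `θ`.
-/

open MeasureTheory ProbabilityTheory

section

variable {Ω : Type*} {m m₀ : MeasurableSpace Ω} {μ : Measure Ω}

lemma integral_sub_sq {f g : Ω → ℝ} (hf : MemLp f 2 μ) (hg : MemLp g 2 μ) :
    ∫ ω, (f ω - g ω) ^ 2 ∂μ
      = ∫ ω, f ω ^ 2 ∂μ - 2 * ∫ ω, f ω * g ω ∂μ + ∫ ω, g ω ^ 2 ∂μ := by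
  have hf2 := hf.integrable_sq
  have hg2 := hg.integrable_sq
  have hfg : Integrable (fun ω ↦ f ω * g ω) μ := hf.integrable_mul hg
  simp_rw [sub_sq, mul_assoc]
  rw [integral_add, integral_sub, integral_const_mul] <;> fun_prop

/-- The paper's `score_j = E[(X_j - Y)² | 𝒢] - v + 2 c_j`, for `X = X_j` and `m = 𝒢`. -/
noncomputable def adjustedScore (m : MeasurableSpace Ω) (μ : Measure[m₀] Ω) (X Y : Ω → ℝ) :
    Ω → ℝ := fun ω ↦
  (μ[(fun x => (X x - Y x) ^ 2)|m]) ω - ((μ[(fun x => Y x ^ 2)|m]) ω - ((μ[Y|m]) ω) ^ 2)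
    + 2 * ((μ[(fun x => X x * Y x)|m]) ω - (μ[X|m]) ω * (μ[Y|m]) ω)

variable {X Y : Ω → ℝ}

lemma integrable_adjustedScore (hX : MemLp X 2 μ) (hY : MemLp Y 2 μ) :
    Integrable (adjustedScore m μ X Y) μ := by
  have hXc := hX.condExp (m := m) one_le_two
  have hYc := hY.condExp (m := m) one_le_two
  have hYc2 := hYc.integrable_sq
  have hXYc : Integrable (fun ω ↦ (μ[X|m]) ω * (μ[Y|m]) ω) μ := hXc.integrable_mul hYc
  unfold adjustedScore
  fun_prop

lemma integral_adjustedScore' [IsFiniteMeasure μ] (hm : m ≤ m₀) (hX : MemLp X 2 μ)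
    (hY : MemLp Y 2 μ) :
    ∫ ω, adjustedScore m μ X Y ω ∂μ
      = ∫ ω, X ω ^ 2 ∂μ - 2 * ∫ ω, (μ[X|m]) ω * (μ[Y|m]) ω ∂μ + ∫ ω, (μ[Y|m]) ω ^ 2 ∂μ := by
  have hXc := hX.condExp (m := m) one_le_two
  have hYc := hY.condExp (m := m) one_le_two
  have hYc2 := hYc.integrable_sq
  have hXYc : Integrable (fun ω ↦ (μ[X|m]) ω * (μ[Y|m]) ω) μ := hXc.integrable_mul hYc
  unfold adjustedScore
  rw [integral_add, integral_sub, integral_sub, integral_const_mul, integral_sub,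
    integral_condExp hm, integral_condExp hm, integral_condExp hm, integral_sub_sq hX hY]
  · ring
  all_goals fun_prop

lemma integral_adjustedScore [IsProbabilityMeasure μ] (hm : m ≤ m₀) (hX : MemLp X 2 μ)
    (hY : MemLp Y 2 μ) :
    ∫ ω, adjustedScore m μ X Y ω ∂μ
      = ∫ ω, (X ω - μ[Y]) ^ 2 ∂μ - 2 * cov[μ[Y|m], μ[X|m]; μ] + Var[μ[Y|m]; μ] := by
  have hXc := hX.condExp (m := m) one_le_two
  have hYc := hY.condExp (m := m) one_le_two
  rw [integral_adjustedScore' hm hX hY, integral_sub_sq hX (memLp_const _),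
    covariance_comm, covariance_eq_sub hXc hYc, variance_eq_sub hYc, integral_condExp hm,
    integral_condExp hm]
  simp only [integral_mul_const, integral_const, probReal_univ, one_smul, Pi.mul_apply,
    Pi.pow_apply]
  ring

lemma integral_mul_sub_integral_mul_integral_eq_covariance [IsProbabilityMeasure μ]
    {f g : Ω → ℝ} (hf : MemLp f 2 μ) (hg : MemLp g 2 μ) :
    ∫ ω, f ω * g ω ∂μ - (∫ ω, f ω ∂μ) * ∫ ω, g ω ∂μ = cov[f, g; μ] :=
  (covariance_eq_sub hf hg).symm

end

/-- Assume the direct estimator is design-unbiased, `E[Y] = θ`.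
With the adjusted scores `score_j = E[(X_j − Y)² | 𝒢] − v + 2c_j` for
`j = 1, 2`, the expected score difference satisfies
`E[score₁ − score₂] = E[(X₁ − θ)² − (X₂ − θ)²] + e` with remainder
`e = −2·Cov(b, d₁ − d₂)`, where `b = E[Y|𝒢] − θ`, `d_j = E[X_j|𝒢] − θ`,
`v = E[Y²|𝒢] − (E[Y|𝒢])²`, `c_j = E[X_j·Y|𝒢] − E[X_j|𝒢]·E[Y|𝒢]`, and
`Cov(U, V) = E[U·V] − E[U]·E[V]`. -/
theorem expected_adjusted_score_difference
    {Ω : Type*} {F : MeasurableSpace Ω} {μ : Measure Ω} [IsProbabilityMeasure μ]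
    {G : MeasurableSpace Ω} (hG : G ≤ F)
    (θ : ℝ) (Y X₁ X₂ : Ω → ℝ)
    (hY : MemLp Y 2 μ) (hX₁ : MemLp X₁ 2 μ) (hX₂ : MemLp X₂ 2 μ)
    (hunbiased : ∫ ω, Y ω ∂μ = θ) :
    ∫ ω, (((μ[(fun x => (X₁ x - Y x) ^ 2)|G]) ω
            - ((μ[(fun x => Y x ^ 2)|G]) ω - ((μ[Y|G]) ω) ^ 2)
            + 2 * ((μ[(fun x => X₁ x * Y x)|G]) ω - (μ[X₁|G]) ω * (μ[Y|G]) ω))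
          - ((μ[(fun x => (X₂ x - Y x) ^ 2)|G]) ω
            - ((μ[(fun x => Y x ^ 2)|G]) ω - ((μ[Y|G]) ω) ^ 2)
            + 2 * ((μ[(fun x => X₂ x * Y x)|G]) ω - (μ[X₂|G]) ω * (μ[Y|G]) ω))) ∂μ
      = (∫ ω, ((X₁ ω - θ) ^ 2 - (X₂ ω - θ) ^ 2) ∂μ)
        + (-2 * ((∫ ω, ((μ[Y|G]) ω - θ)
                    * (((μ[X₁|G]) ω - θ) - ((μ[X₂|G]) ω - θ)) ∂μ)
            - (∫ ω, ((μ[Y|G]) ω - θ) ∂μ)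
              * ∫ ω, (((μ[X₁|G]) ω - θ) - ((μ[X₂|G]) ω - θ)) ∂μ)) := by
  have hYc := hY.condExp (m := G) one_le_two
  have hX₁c := hX₁.condExp (m := G) one_le_two
  have hX₂c := hX₂.condExp (m := G) one_le_two
  have hX₁θ : Integrable (fun ω ↦ (X₁ ω - θ) ^ 2) μ := (hX₁.sub (memLp_const θ)).integrable_sq
  have hX₂θ : Integrable (fun ω ↦ (X₂ ω - θ) ^ 2) μ := (hX₂.sub (memLp_const θ)).integrable_sq
  change ∫ ω, adjustedScore G μ X₁ Y ω - adjustedScore G μ X₂ Y ω ∂μ = _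
  rw [integral_sub (integrable_adjustedScore hX₁ hY) (integrable_adjustedScore hX₂ hY),
    integral_adjustedScore hG hX₁ hY, integral_adjustedScore hG hX₂ hY, integral_sub hX₁θ hX₂θ,
    integral_mul_sub_integral_mul_integral_eq_covariance ?_ ?_]
  · simp only [sub_sub_sub_cancel_right]
    rw [covariance_sub_const_left integrable_condExp, covariance_fun_sub_right hYc hX₁c hX₂c,
      hunbiased]
    ring
  · exact hYc.sub (memLp_const θ)
  · exact (hX₁c.sub (memLp_const θ)).sub (hX₂c.sub (memLp_const θ))
end
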